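/- arXiv:1608.03398 — 3 statements merged into one kernel-verified Lean document; each statement's English description precedes it below -/
import Mathlib

section
/- Let F be a finite field with Q elements, let S be a nonempty subset of F, let p̄ be a real number, and let w : F → ℝ be a probability distribution on F (w(y) ≥ 0 for all y and Σ_{y∈F} w(y) = 1) such that w(y) ≤ p̄ for every y ∈ F. Then for all functions f : F → F and g : F → F, the winning probability of the deterministic strategy (f, g) in the game CHSH_Q^S(p̄) satisfies (1/|S|) · Σ_{x∈S} Σ_{y∈F} w(y) · 𝟙[f(x) + g(y) = x·y] ≤ p̄ + √(2/|S|). -/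
/-!
Let `W x` be the probability that Adeline wins on input `x`, and `V = ∑_{x ∈ S} W x`.
Expanding `∑_{x ∈ S} (W x)²` as a sum over pairs `(y, y')` of Bastian's inputs, the diagonal
contributes at most `p̄ V` since `w ≤ p̄`, and each off-diagonal pair at most `w y w y'`, because
`f x + g y = x y` and `f x + g y' = x y'` force `x = (g y - g y') / (y - y')`. Hence
`∑ (W x)² ≤ p̄ V + 1`, and Cauchy–Schwarz gives `V² ≤ |S| (p̄ V + 1)`, a quadratic inequality
whose solution is `V / |S| ≤ p̄ + 1 / √|S|`.
-/

open Finset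

lemma card_filter_win_both_le_one {R : Type*} [CommRing R] [NoZeroDivisors R] [DecidableEq R]
    (S : Finset R) (f g : R → R) {y y' : R} (hne : y ≠ y') :
    #{x ∈ S | f x + g y = x * y ∧ f x + g y' = x * y'} ≤ 1 := by
  refine card_le_one.2 fun a ha b hb => ?_
  simp only [mem_filter] at ha hb
  obtain ⟨-, ha, ha'⟩ := ha
  obtain ⟨-, hb, hb'⟩ := hb
  refine mul_right_cancel₀ (sub_ne_zero.2 hne) ?_
  linear_combination ha' - ha - hb' + hb

section WinProb

variable {α β : Type*} [Fintype β] (P : α → β → Prop) [DecidableRel P] (w : β → ℝ)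

def winProb (x : α) : ℝ := ∑ y, w y * if P x y then 1 else 0

lemma sum_winProb_eq (S : Finset α) :
    ∑ x ∈ S, winProb P w x = ∑ y, w y * #{x ∈ S | P x y} := by
  simp_rw [winProb, sum_comm (s := S), ← mul_sum, sum_boole]

lemma sum_winProb_sq_eq (S : Finset α) :
    ∑ x ∈ S, winProb P w x ^ 2 = ∑ y, ∑ y', w y * w y' * #{x ∈ S | P x y ∧ P x y'} := by
  simp_rw [winProb, sq, sum_mul_sum, mul_mul_mul_comm, ite_zero_mul_ite_zero, one_mul]
  rw [sum_comm]
  refine sum_congr rfl fun y _ => ?_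
  rw [sum_comm]
  simp_rw [← mul_sum, sum_boole]

lemma sum_winProb_sq_le (S : Finset α) {p : ℝ}
    (hP : ∀ y y', y ≠ y' → #{x ∈ S | P x y ∧ P x y'} ≤ 1)
    (hw0 : ∀ y, 0 ≤ w y) (hw1 : ∑ y, w y = 1) (hwp : ∀ y, w y ≤ p) :
    ∑ x ∈ S, winProb P w x ^ 2 ≤ p * ∑ x ∈ S, winProb P w x + 1 := by
  classical
  have hpair : ∀ y y', w y * w y' * #{x ∈ S | P x y ∧ P x y'} ≤
      (if y = y' then p * (w y * #{x ∈ S | P x y}) else 0) + w y * w y' := by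
    intro y y'
    obtain rfl | hne := eq_or_ne y y'
    · have := mul_le_mul_of_nonneg_right (hwp y) (mul_nonneg (hw0 y) (#{x ∈ S | P x y}).cast_nonneg)
      simp only [and_self, if_true]
      nlinarith [mul_self_nonneg (w y)]
    · rw [if_neg hne, zero_add]
      exact mul_le_of_le_one_right (mul_nonneg (hw0 y) (hw0 y')) (by exact_mod_cast hP y y' hne)
  calc ∑ x ∈ S, winProb P w x ^ 2
      = ∑ y, ∑ y', w y * w y' * #{x ∈ S | P x y ∧ P x y'} := sum_winProb_sq_eq P w S
    _ ≤ ∑ y, ∑ y', ((if y = y' then p * (w y * #{x ∈ S | P x y}) else 0) + w y * w y') := by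
      gcongr with y _ y' _
      exact hpair y y'
    _ = p * ∑ x ∈ S, winProb P w x + 1 := by
      simp_rw [sum_add_distrib, sum_ite_eq, mem_univ, if_true, ← mul_sum, ← sum_mul, hw1,
        one_mul, sum_winProb_eq]

end WinProb

lemma div_le_add_sqrt_of_sq_le {s p V : ℝ} (hs : 0 ≤ s) (hp : 0 ≤ p)
    (h : V ^ 2 ≤ s * (p * V + 1)) : V / s ≤ p + √(2 / s) := by
  obtain rfl | hs := hs.eq_or_lt
  · simpa using hp
  have hV : V ≤ s * p + √s := by
    by_contra! hlt
    have hsqrt : 0 < √s := Real.sqrt_pos.2 hs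
    have hVs : √s < V := by nlinarith [mul_nonneg hs.le hp]
    have h1 := mul_lt_mul_of_pos_left hlt (hsqrt.trans hVs)
    have h2 := mul_lt_mul_of_pos_left hVs hsqrt
    nlinarith [Real.mul_self_sqrt hs.le]
  calc V / s ≤ (s * p + √s) / s := by gcongr
    _ = p + √(1 / s) := by rw [add_div, mul_div_cancel_left₀ _ hs.ne', Real.sqrt_div_self',
        Real.sqrt_div' _ hs.le, Real.sqrt_one]
    _ ≤ p + √(2 / s) := by gcongr; norm_num

theorem chsh_S_value_bound_general (F : Type*) [Field F] [Fintype F] [DecidableEq F]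
    (S : Finset F)
    (pbar : ℝ) (w : F → ℝ) (hw0 : ∀ y, 0 ≤ w y) (hw1 : ∑ y : F, w y = 1)
    (hwp : ∀ y, w y ≤ pbar) (f g : F → F) :
    (1 / (S.card : ℝ)) *
        ∑ x ∈ S, ∑ y : F, w y * (if f x + g y = x * y then (1 : ℝ) else 0)
      ≤ pbar + Real.sqrt (2 / S.card) := by
  set P : F → F → Prop := fun x y => f x + g y = x * y
  have hsq : ∑ x ∈ S, winProb P w x ^ 2 ≤ pbar * ∑ x ∈ S, winProb P w x + 1 :=
    sum_winProb_sq_le P w S (fun _ _ => card_filter_win_both_le_one S f g) hw0 hw1 hwp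
  have hCS : (∑ x ∈ S, winProb P w x) ^ 2 ≤ #S * ∑ x ∈ S, winProb P w x ^ 2 :=
    sq_sum_le_card_mul_sum_sq
  rw [one_div_mul_eq_div]
  exact div_le_add_sqrt_of_sq_le (Nat.cast_nonneg _) ((hw0 0).trans (hwp 0))
    (hCS.trans (mul_le_mul_of_nonneg_left hsq (Nat.cast_nonneg _)))

/-- Upper bound on the classical value of the game `CHSH_Q^S(p̄)`: for a finite field `F`
with `Q` elements, a nonempty subset `S ⊆ F`, a probability distribution `w` on `F` with
`w(y) ≤ p̄` for all `y`, and any deterministic strategy `(f, g)`,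
`(1/|S|) · Σ_{x ∈ S} Σ_{y ∈ F} w(y) · 𝟙[f(x) + g(y) = x·y] ≤ p̄ + √(2/|S|)`. -/
theorem chsh_S_value_bound (F : Type*) [Field F] [Fintype F] [DecidableEq F]
    (Q : ℕ) (hQ : Fintype.card F = Q)
    (S : Finset F) (hS : S.Nonempty)
    (pbar : ℝ) (w : F → ℝ) (hw0 : ∀ y, 0 ≤ w y) (hw1 : ∑ y : F, w y = 1)
    (hwp : ∀ y, w y ≤ pbar) (f g : F → F) :
    (1 / (S.card : ℝ)) *
        ∑ x ∈ S, ∑ y : F, w y * (if f x + g y = x * y then (1 : ℝ) else 0)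
      ≤ pbar + Real.sqrt (2 / S.card) :=
  chsh_S_value_bound_general F S pbar w hw0 hw1 hwp f g
end

section
/- Let F be a finite field with Q elements. Then for all functions y : F → F and g : {0,1} → F, one has (1/(2Q)) · Σ_{d∈{0,1}} Σ_{b∈F} 𝟙[g(d) = y(b) − d·b] ≤ 1/2 + √(2/Q), where d ∈ {0,1} is viewed as the corresponding element of F in the product d·b. -/
/-!
A guess `g 0` is right exactly when `y b = g 0`, and a guess `g 1` exactly when `y b - b = g 1`.
Both happen only for `b = g 0 - g 1`, so the two sets of winning challenges overlap in at most one
point and the total number of wins is at most `Q + 1`. Hence the success probability is at most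
`1/2 + 1/(2Q)`, and `1/(2Q) ≤ √(2/Q)`.
-/

open Finset

theorem Finset.card_add_card_le_card_add_one {α : Type*} [Fintype α] [DecidableEq α]
    (A B : Finset α) (h : #(A ∩ B) ≤ 1) : #A + #B ≤ Fintype.card α + 1 := by
  have := card_union_add_card_inter A B
  have := card_le_univ (A ∪ B)
  omega

theorem card_inter_filter_eq_filter_sub_eq_le_one {G : Type*} [AddGroup G] [Fintype G]
    [DecidableEq G] (y : G → G) (c₀ c₁ : G) :
    #(({b | y b = c₀} : Finset G) ∩ ({b | y b - b = c₁} : Finset G)) ≤ 1 := by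
  have determined :
      ∀ b ∈ (({b | y b = c₀} : Finset G) ∩ ({b | y b - b = c₁} : Finset G)), b = -c₁ + c₀ := by
    intro b hb
    simp only [mem_inter, mem_filter, mem_univ, true_and] at hb
    rw [← hb.1, ← hb.2, neg_sub, sub_add_cancel]
  exact card_le_one.2 fun a ha b hb => (determined a ha).trans (determined b hb).symm

theorem one_div_two_mul_le_sqrt_two_div {x : ℝ} (hx : 1 / 8 ≤ x) :
    1 / (2 * x) ≤ Real.sqrt (2 / x) := by
  have hx₀ : 0 < x := by linarith
  apply Real.le_sqrt_of_sq_le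
  rw [div_pow, le_div_iff₀ hx₀, div_mul_eq_mul_div, div_le_iff₀ (by positivity)]
  nlinarith

/-- Base case of the security recursion: for a finite field `F` with `Q` elements and any
functions `y : F → F` and `g : {0,1} → F`,
`(1/(2Q)) · Σ_{d ∈ {0,1}} Σ_{b ∈ F} 𝟙[g(d) = y(b) − d·b] ≤ 1/2 + √(2/Q)`. -/
theorem base_case_bound (F : Type*) [Field F] [Fintype F] [DecidableEq F]
    (Q : ℕ) (hQ : Fintype.card F = Q) (y : F → F) (g : Fin 2 → F) :
    (1 / (2 * (Q : ℝ))) *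
        ∑ d : Fin 2, ∑ b : F, (if g d = y b - (d.val : F) * b then (1 : ℝ) else 0)
      ≤ 1 / 2 + Real.sqrt (2 / Q) := by
  have hQ₁ : (1 : ℝ) ≤ Q := by exact_mod_cast hQ ▸ Fintype.card_pos
  have wins : ∑ d : Fin 2, ∑ b : F, (if g d = y b - (d.val : F) * b then (1 : ℝ) else 0)
      = #({b | y b = g 0} : Finset F) + #({b | y b - b = g 1} : Finset F) := by
    simp only [Fin.sum_univ_two, sum_boole, Fin.val_zero, Fin.val_one, Nat.cast_zero,
      Nat.cast_one, zero_mul, one_mul, sub_zero, eq_comm (a := g _)]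
  have wins_le : (#({b | y b = g 0} : Finset F) + #({b | y b - b = g 1} : Finset F) : ℝ)
      ≤ Q + 1 := by
    exact_mod_cast hQ ▸ card_add_card_le_card_add_one _ _
      (card_inter_filter_eq_filter_sub_eq_le_one y (g 0) (g 1))
  calc (1 / (2 * (Q : ℝ))) *
        ∑ d : Fin 2, ∑ b : F, (if g d = y b - (d.val : F) * b then (1 : ℝ) else 0)
      ≤ (1 / (2 * (Q : ℝ))) * (Q + 1) := by
        rw [wins]; gcongr
    _ = 1 / 2 + 1 / (2 * (Q : ℝ)) := by field_simp
    _ ≤ 1 / 2 + Real.sqrt (2 / Q) := by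
        gcongr; exact one_div_two_mul_le_sqrt_two_div (by linarith)
end

section
/- Let F be a finite field with Q elements, let B and S be nonempty subsets of F, let α : F → F and y : F → F be functions, and set μ := max_{c∈F} |{b ∈ B : α(b) = c}| / |B|. Then for every function g : F → F, one has (1/(|B|·|S|)) · Σ_{b∈B} Σ_{s∈S} 𝟙[g(b) = y(s) − s·α(b)] ≤ μ + √(2/|S|). -/
/-!
For `b ∈ B`, the inner sum counts the points `(s, y s)`, `s ∈ S`, on the line of slope `α b` and
intercept `g b`. Let `T` be the total number of incidences and `c s` the number of lines through
`(s, y s)`. Then `Σ_s c s ^ 2` counts pairs of lines together with a common point: two lines of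
distinct slopes share at most one point, and a line shares at most all of its own points with the
`≤ μ |B|` lines of the same slope, so `Σ_s c s ^ 2 ≤ |B|² + μ |B| T`. Cauchy–Schwarz
`T² ≤ |S| Σ_s c s ^ 2` then gives `t² ≤ 1/|S| + μ t` for `t = T / (|B| |S|)`, whence
`t ≤ μ + √(1/|S|)`.
-/

open Finset

theorem card_graph_inter_two_lines_le_one {F : Type*} [Field F] [DecidableEq F] (S : Finset F)
    (y : F → F) {a a' : F} (ha : a ≠ a') (u u' : F) :
    #{s ∈ S | u = y s - s * a ∧ u' = y s - s * a'} ≤ 1 := by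
  refine card_le_one.2 fun s hs t ht => ?_
  simp only [mem_filter] at hs ht
  have : (s - t) * (a - a') = 0 := by
    linear_combination (hs.2.1 - hs.2.2) - (ht.2.1 - ht.2.2)
  exact sub_eq_zero.1 ((mul_eq_zero.1 this).resolve_right (sub_ne_zero.2 ha))

theorem le_add_sqrt_of_sq_le_add_mul {x m c : ℝ} (hm : 0 ≤ m) (hc : 0 ≤ c)
    (h : x ^ 2 ≤ c + m * x) : x ≤ m + √c := by
  by_contra! hlt
  have hsq := Real.sq_sqrt hc
  nlinarith [Real.sqrt_nonneg c, mul_nonneg hm (Real.sqrt_nonneg c)]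

section Incidences

variable {β σ γ : Type*} [DecidableEq γ] (B : Finset β) (S : Finset σ) (P : β → σ → Prop)
  [∀ b s, Decidable (P b s)]

theorem sum_sq_card_filter_eq_sum_card_filter_and :
    ∑ s ∈ S, #{b ∈ B | P b s} ^ 2 = ∑ b ∈ B, ∑ b' ∈ B, #{s ∈ S | P b s ∧ P b' s} := by
  simp_rw [sq, card_filter, sum_mul_sum, ite_zero_mul_ite_zero, mul_one]
  rw [sum_comm]
  exact sum_congr rfl fun b _ => sum_comm

variable {S P} (α : β → γ)

theorem sum_card_filter_and_le
    (hP : ∀ b b', α b ≠ α b' → #{s ∈ S | P b s ∧ P b' s} ≤ 1)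
    {N : ℕ} {b : β} (hN : #{b' ∈ B | α b' = α b} ≤ N) :
    ∑ b' ∈ B, #{s ∈ S | P b s ∧ P b' s} ≤ #B + N * #{s ∈ S | P b s} := by
  rw [← sum_filter_add_sum_filter_not B (fun b' => α b' = α b)]
  have same_slope : ∑ b' ∈ B with α b' = α b, #{s ∈ S | P b s ∧ P b' s}
      ≤ N * #{s ∈ S | P b s} :=
    calc _ ≤ ∑ b' ∈ B with α b' = α b, #{s ∈ S | P b s} :=
          sum_le_sum fun b' _ => card_le_card (monotone_filter_right S fun _ _ h => h.1)
      _ ≤ N * #{s ∈ S | P b s} := by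
          rw [sum_const, smul_eq_mul]; exact Nat.mul_le_mul_right _ hN
  have other_slope : ∑ b' ∈ B with ¬α b' = α b, #{s ∈ S | P b s ∧ P b' s} ≤ #B :=
    calc _ ≤ ∑ b' ∈ B with ¬α b' = α b, 1 :=
          sum_le_sum fun b' hb' => hP b b' (Ne.symm (mem_filter.1 hb').2)
      _ ≤ #B := by rw [sum_const, smul_eq_mul, mul_one]; exact card_filter_le _ _
  omega

theorem sq_sum_card_filter_le
    (hP : ∀ b b', α b ≠ α b' → #{s ∈ S | P b s ∧ P b' s} ≤ 1)
    {N : ℕ} (hN : ∀ b ∈ B, #{b' ∈ B | α b' = α b} ≤ N) :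
    (∑ b ∈ B, #{s ∈ S | P b s}) ^ 2 ≤ #S * (#B ^ 2 + N * ∑ b ∈ B, #{s ∈ S | P b s}) :=
  calc (∑ b ∈ B, #{s ∈ S | P b s}) ^ 2 = (∑ s ∈ S, #{b ∈ B | P b s}) ^ 2 :=
        congrArg (· ^ 2) (sum_card_bipartiteAbove_eq_sum_card_bipartiteBelow (r := P))
    _ ≤ #S * ∑ s ∈ S, #{b ∈ B | P b s} ^ 2 := sq_sum_le_card_mul_sum_sq
    _ = #S * ∑ b ∈ B, ∑ b' ∈ B, #{s ∈ S | P b s ∧ P b' s} := by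
        rw [sum_sq_card_filter_eq_sum_card_filter_and]
    _ ≤ #S * ∑ b ∈ B, (#B + N * #{s ∈ S | P b s}) := by
        gcongr with b hb
        exact sum_card_filter_and_le B α hP (hN b hb)
    _ = #S * (#B ^ 2 + N * ∑ b ∈ B, #{s ∈ S | P b s}) := by
        rw [sum_add_distrib, sum_const, smul_eq_mul, mul_sum, sq]

end Incidences

theorem recursion_step_bound_general (F : Type*) [Field F] [Fintype F] [DecidableEq F]
    (B S : Finset F) (hB : B.Nonempty) (hS : S.Nonempty)
    (α y : F → F) (μ : ℝ)
    (hμ : μ = ((Finset.univ.sup fun c : F => (B.filter fun b => α b = c).card : ℕ) : ℝ)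
      / (B.card : ℝ))
    (g : F → F) :
    (1 / ((B.card : ℝ) * (S.card : ℝ))) *
        ∑ b ∈ B, ∑ s ∈ S, (if g b = y s - s * α b then (1 : ℝ) else 0)
      ≤ μ + Real.sqrt (2 / S.card) := by
  set N := univ.sup fun c : F => #{b ∈ B | α b = c}
  set T := ∑ b ∈ B, #{s ∈ S | g b = y s - s * α b}
  have hcount : T ^ 2 ≤ #S * (#B ^ 2 + N * T) :=
    sq_sum_card_filter_le B α
      (fun b b' h => card_graph_inter_two_lines_le_one S y h (g b) (g b'))
      (fun b _ => le_sup (f := fun c => #{b ∈ B | α b = c}) (mem_univ (α b)))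
  have hBpos : (0 : ℝ) < #B := by exact_mod_cast hB.card_pos
  have hSpos : (0 : ℝ) < #S := by exact_mod_cast hS.card_pos
  set t := (T : ℝ) / (#B * #S) with ht_def
  have hlhs : 1 / ((#B : ℝ) * #S) *
      ∑ b ∈ B, ∑ s ∈ S, (if g b = y s - s * α b then (1 : ℝ) else 0) = t := by
    simp only [sum_boole, ← Nat.cast_sum, T, t, one_div_mul_eq_div]
  have hquad : t ^ 2 ≤ 1 / #S + μ * t :=
    calc t ^ 2 = (T : ℝ) ^ 2 / (#B * #S) ^ 2 := div_pow ..
      _ ≤ #S * (#B ^ 2 + N * T) / (#B * #S) ^ 2 := by gcongr; exact_mod_cast hcount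
      _ = 1 / #S + μ * t := by rw [hμ, ht_def]; field_simp
  rw [hlhs]
  calc t ≤ μ + √(1 / #S) :=
        le_add_sqrt_of_sq_le_add_mul (by rw [hμ]; positivity) (by positivity) hquad
    _ ≤ μ + √(2 / #S) := by gcongr; norm_num

/-- Single-round recursion step: `F` a finite field with `Q` elements, `B, S ⊆ F` nonempty,
`α, y : F → F`, and `μ := max_{c ∈ F} |{b ∈ B : α(b) = c}| / |B|`.  Then for every
`g : F → F`,
`(1/(|B|·|S|)) · Σ_{b ∈ B} Σ_{s ∈ S} 𝟙[g(b) = y(s) − s·α(b)] ≤ μ + √(2/|S|)`. -/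
theorem recursion_step_bound (F : Type*) [Field F] [Fintype F] [DecidableEq F]
    (Q : ℕ) (hQ : Fintype.card F = Q)
    (B S : Finset F) (hB : B.Nonempty) (hS : S.Nonempty)
    (α y : F → F) (μ : ℝ)
    (hμ : μ = ((Finset.univ.sup fun c : F => (B.filter fun b => α b = c).card : ℕ) : ℝ)
      / (B.card : ℝ))
    (g : F → F) :
    (1 / ((B.card : ℝ) * (S.card : ℝ))) *
        ∑ b ∈ B, ∑ s ∈ S, (if g b = y s - s * α b then (1 : ℝ) else 0)
      ≤ μ + Real.sqrt (2 / S.card) :=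
  recursion_step_bound_general F B S hB hS α y μ hμ g
end
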